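/- arXiv:2404.08568 — 3 statements merged into one kernel-verified Lean document; each statement's English description precedes it below -/
import Mathlib

section
/- Let f : C → C' be a homotopy τ-equivariant chain homotopy equivalence between τ-complexes, with homotopy τ-equivariant homotopy inverse g, such that the homotopies g∘f ≃ 1 and f∘g ≃ 1 are coherent. Then the induced map f_τ : C_τ → C'_τ is a chain homotopy equivalence with homotopy inverse g_τ. -/
/- A τ-complex over a ring of characteristic 2 is modelled as a module with a differential `d`
and a chain involution `τ`. `coneD d τ` is the differential `[[d,0],[1+τ,d]]` of `Cone(1+τ)` on
`C ⊕ C[1]`, and `coneMap f hf = [[f,0],[hf,f]]` is the induced map between cones. -/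

def coneD {R C : Type*} [CommRing R] [AddCommGroup C] [Module R C]
    (d τ : C →ₗ[R] C) : C × C →ₗ[R] C × C :=
  LinearMap.prod (d ∘ₗ LinearMap.fst R C C)
    ((LinearMap.id + τ) ∘ₗ LinearMap.fst R C C + d ∘ₗ LinearMap.snd R C C)

def coneMap {R C C' : Type*} [CommRing R] [AddCommGroup C] [Module R C]
    [AddCommGroup C'] [Module R C'] (f hf : C →ₗ[R] C') : C × C →ₗ[R] C' × C' :=
  LinearMap.prod (f ∘ₗ LinearMap.fst R C C)
    (hf ∘ₗ LinearMap.fst R C C + f ∘ₗ LinearMap.snd R C C)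

/-!
The cone construction is functorial: `(g, h_g) ∘ (f, h_f)` has equivariance homotopy
`h_g f + g h_f`, and `coneMap` sends it to `g_τ ∘ f_τ`. A coherent homotopy `(h, k)` between
`f` and `g` is sent to the chain homotopy `[[h,0],[k,h]]` between `f_τ` and `g_τ`: the
lower-left entry `(1 + τ')h + h(1 + τ) + d'k + kd` of `D'P + PD` differs from `h_f + h_g`
only by multiples of 2. Applied to `g ∘ f ≃ 1` and `f ∘ g ≃ 1` this gives the theorem.
-/

section Cone

variable {R : Type*} [CommRing R] {C C' C'' : Type*}
  [AddCommGroup C] [Module R C] [AddCommGroup C'] [Module R C'] [AddCommGroup C''] [Module R C'']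

@[simp]
theorem coneMap_apply (f hf : C →ₗ[R] C') (x y : C) :
    coneMap f hf (x, y) = (f x, hf x + f y) :=
  rfl

@[simp]
theorem coneD_apply (d τ : C →ₗ[R] C) (x y : C) : coneD d τ (x, y) = (d x, x + τ x + d y) :=
  rfl

theorem coneMap_comp (f hf : C →ₗ[R] C') (g hg : C' →ₗ[R] C'') :
    coneMap g hg ∘ₗ coneMap f hf = coneMap (g ∘ₗ f) (hg ∘ₗ f + g ∘ₗ hf) := by
  refine LinearMap.ext fun ⟨x, y⟩ => Prod.ext ?_ ?_ <;> simp [add_assoc]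

theorem coneMap_id : coneMap (LinearMap.id : C →ₗ[R] C) 0 = LinearMap.id := by
  refine LinearMap.ext fun ⟨x, y⟩ => Prod.ext ?_ ?_ <;> simp

theorem coneMap_add_coneMap_eq_of_coherent (h2 : (2 : R) = 0)
    (d τ : C →ₗ[R] C) (d' τ' : C' →ₗ[R] C') (f hf g hg h k : C →ₗ[R] C')
    (hfg : f + g = d' ∘ₗ h + h ∘ₗ d)
    (hk : (τ' ∘ₗ h + h ∘ₗ τ) + (hg + hf) = d' ∘ₗ k + k ∘ₗ d) :
    coneMap f hf + coneMap g hg = coneD d' τ' ∘ₗ coneMap h k + coneMap h k ∘ₗ coneD d τ := by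
  refine LinearMap.ext fun ⟨x, y⟩ => Prod.ext ?_ ?_
  · simpa using LinearMap.congr_fun hfg x
  · have hy := LinearMap.congr_fun hfg y
    have hx := LinearMap.congr_fun hk x
    simp only [LinearMap.add_apply, LinearMap.comp_apply] at hx hy
    simp only [LinearMap.add_apply, LinearMap.comp_apply, coneMap_apply, coneD_apply, map_add,
      Prod.snd_add]
    linear_combination (norm := module) hy + hx - h2 • (h x + τ' (h x) + h (τ x))

end Cone

theorem cone_induced_homotopy_equiv_general
    {R : Type*} [CommRing R] (h2 : (2 : R) = 0)
    {C C' : Type*} [AddCommGroup C] [Module R C] [AddCommGroup C'] [Module R C']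
    (d : C →ₗ[R] C) (d' : C' →ₗ[R] C') (τ : C →ₗ[R] C) (τ' : C' →ₗ[R] C')
    (f : C →ₗ[R] C') (g : C' →ₗ[R] C) (hF : C →ₗ[R] C') (hG : C' →ₗ[R] C)
    -- homotopies g∘f ≃ 1 and f∘g ≃ 1 :
    (H : C →ₗ[R] C) (hH : g ∘ₗ f + LinearMap.id = d ∘ₗ H + H ∘ₗ d)
    (H' : C' →ₗ[R] C') (hH' : f ∘ₗ g + LinearMap.id = d' ∘ₗ H' + H' ∘ₗ d')
    -- coherence of these homotopies :
    (K : C →ₗ[R] C)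
    (hK : (τ ∘ₗ H + H ∘ₗ τ) + (hG ∘ₗ f + g ∘ₗ hF) = d ∘ₗ K + K ∘ₗ d)
    (K' : C' →ₗ[R] C')
    (hK' : (τ' ∘ₗ H' + H' ∘ₗ τ') + (hF ∘ₗ g + f ∘ₗ hG) = d' ∘ₗ K' + K' ∘ₗ d') :
    (∃ P : C × C →ₗ[R] C × C,
        coneMap g hG ∘ₗ coneMap f hF + LinearMap.id
          = coneD d τ ∘ₗ P + P ∘ₗ coneD d τ) ∧
    (∃ Q : C' × C' →ₗ[R] C' × C',
        coneMap f hF ∘ₗ coneMap g hG + LinearMap.id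
          = coneD d' τ' ∘ₗ Q + Q ∘ₗ coneD d' τ') := by
  refine ⟨⟨coneMap H K, ?_⟩, ⟨coneMap H' K', ?_⟩⟩
  · rw [coneMap_comp, ← coneMap_id]
    exact coneMap_add_coneMap_eq_of_coherent h2 d τ d τ _ _ _ _ H K hH (by rwa [zero_add])
  · rw [coneMap_comp, ← coneMap_id]
    exact coneMap_add_coneMap_eq_of_coherent h2 d' τ' d' τ' _ _ _ _ H' K' hH' (by rwa [zero_add])

/-- if `f` is a homotopy τ-equivariant homotopy equivalence with
homotopy τ-equivariant homotopy inverse `g`, and the homotopies `g∘f ≃ 1`,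
`f∘g ≃ 1` are coherent (the identity carrying the zero equivariance homotopy),
then `f_τ : C_τ → C'_τ` is a chain homotopy equivalence with inverse `g_τ`. -/
theorem cone_induced_homotopy_equiv
    {R : Type*} [CommRing R] (h2 : (2 : R) = 0)
    {C C' : Type*} [AddCommGroup C] [Module R C] [AddCommGroup C'] [Module R C']
    (d : C →ₗ[R] C) (d' : C' →ₗ[R] C') (τ : C →ₗ[R] C) (τ' : C' →ₗ[R] C')
    (hdd : d ∘ₗ d = 0) (hdd' : d' ∘ₗ d' = 0)
    (hτ : τ ∘ₗ τ = LinearMap.id) (hτ' : τ' ∘ₗ τ' = LinearMap.id)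
    (hdτ : d ∘ₗ τ = τ ∘ₗ d) (hdτ' : d' ∘ₗ τ' = τ' ∘ₗ d')
    (f : C →ₗ[R] C') (hf : d' ∘ₗ f = f ∘ₗ d)
    (g : C' →ₗ[R] C) (hg : d ∘ₗ g = g ∘ₗ d')
    (hF : C →ₗ[R] C') (heqf : τ' ∘ₗ f + f ∘ₗ τ = d' ∘ₗ hF + hF ∘ₗ d)
    (hG : C' →ₗ[R] C) (heqg : τ ∘ₗ g + g ∘ₗ τ' = d ∘ₗ hG + hG ∘ₗ d')
    -- homotopies g∘f ≃ 1 and f∘g ≃ 1 :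
    (H : C →ₗ[R] C) (hH : g ∘ₗ f + LinearMap.id = d ∘ₗ H + H ∘ₗ d)
    (H' : C' →ₗ[R] C') (hH' : f ∘ₗ g + LinearMap.id = d' ∘ₗ H' + H' ∘ₗ d')
    -- coherence of these homotopies :
    (K : C →ₗ[R] C)
    (hK : (τ ∘ₗ H + H ∘ₗ τ) + (hG ∘ₗ f + g ∘ₗ hF) = d ∘ₗ K + K ∘ₗ d)
    (K' : C' →ₗ[R] C')
    (hK' : (τ' ∘ₗ H' + H' ∘ₗ τ') + (hF ∘ₗ g + f ∘ₗ hG) = d' ∘ₗ K' + K' ∘ₗ d') :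
    (∃ P : C × C →ₗ[R] C × C,
        coneMap g hG ∘ₗ coneMap f hF + LinearMap.id
          = coneD d τ ∘ₗ P + P ∘ₗ coneD d τ) ∧
    (∃ Q : C' × C' →ₗ[R] C' × C',
        coneMap f hF ∘ₗ coneMap g hG + LinearMap.id
          = coneD d' τ' ∘ₗ Q + Q ∘ₗ coneD d' τ') :=
  cone_induced_homotopy_equiv_general h2 d d' τ τ' f g hF hG H hH H' hH' K hK K' hK'
end

section
/- Let C, C' be τ-complexes over F₂ and z ∈ C, z' ∈ C' τ-invariant cycles. Suppose there are elements x, y ∈ C and x', y' ∈ C' such that (z, 0) is homologous to (x, y) in C_τ = Cone(1+τ) and (0, z') is homologous to (x', y') in C'_τ. Then in C⊗_τ = Cone(1⊗1+τ⊗τ), the cycle (0, z⊗z') is homologous to (x⊗x', y⊗x' + τx⊗y'). -/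
/-!
Over `𝔽₂` the tensor differential `∂ = d ⊗ 1 + 1 ⊗ d'` satisfies the Leibniz rule without signs.
If `(z, 0) - (x, y) = D(a, b)` and `(0, z') - (x', y') = D(a', b')`, then expanding the boundary of
`(x ⊗ a', x ⊗ b' + τa ⊗ y' + (1 + τ ⊗ τ')(a ⊗ a') + da ⊗ b' + b ⊗ d'a')` by Leibniz, with
`d² = 0`, `dτ = τd`, `dz = d'z' = 0` and `τz = z`, all terms cancel in pairs except those of
`(x ⊗ x', z ⊗ z' + y ⊗ x' + τx ⊗ y')`.
-/

open TensorProduct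

theorem coneD_apply_s8 {R C : Type*} [CommRing R] [AddCommGroup C] [Module R C]
    (d τ : C →ₗ[R] C) (p : C × C) : coneD d τ p = (d p.1, p.1 + τ p.1 + d p.2) :=
  rfl

section CharTwo

variable {C C' : Type*} [AddCommGroup C] [Module (ZMod 2) C] [AddCommGroup C']
  [Module (ZMod 2) C']

theorem sub_eq_coneD_iff (d τ : C →ₗ[ZMod 2] C) {u₁ u₂ v₁ v₂ a b : C} :
    (u₁, u₂) - (v₁, v₂) = coneD d τ (a, b) ↔ v₁ = u₁ + d a ∧ v₂ = u₂ + (a + τ a + d b) := by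
  rw [ZModModule.sub_eq_add, add_comm, ← ZModModule.sub_eq_add, sub_eq_iff_eq_add', coneD_apply_s8,
    Prod.mk_add_mk, Prod.mk.injEq]

theorem coneD_tensor_primitive (d τ : C →ₗ[ZMod 2] C) (d' τ' : C' →ₗ[ZMod 2] C')
    (hdd : d ∘ₗ d = 0) (hdd' : d' ∘ₗ d' = 0) (hdτ : d ∘ₗ τ = τ ∘ₗ d) (hdτ' : d' ∘ₗ τ' = τ' ∘ₗ d')
    {z : C} (hz : d z = 0) (hzτ : τ z = z) {z' : C'} (hz' : d' z' = 0)
    {a b x y : C} {a' b' x' y' : C'}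
    (hx : x = z + d a) (hy : y = a + τ a + d b)
    (hx' : x' = d' a') (hy' : y' = z' + (a' + τ' a' + d' b')) :
    coneD (map d LinearMap.id + map LinearMap.id d') (map τ τ')
        (x ⊗ₜ a', x ⊗ₜ b' + τ a ⊗ₜ y' + (a ⊗ₜ a' + τ a ⊗ₜ τ' a') + d a ⊗ₜ b' + b ⊗ₜ d' a')
      = (x ⊗ₜ x', z ⊗ₜ z' + (y ⊗ₜ x' + τ x ⊗ₜ y')) := by
  have hdd (v : C) : d (d v) = 0 := LinearMap.congr_fun hdd v
  have hdd' (v : C') : d' (d' v) = 0 := LinearMap.congr_fun hdd' v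
  have hdτ (v : C) : d (τ v) = τ (d v) := LinearMap.congr_fun hdτ v
  have hdτ' (v : C') : d' (τ' v) = τ' (d' v) := LinearMap.congr_fun hdτ' v
  subst hx hy hx' hy'
  simp only [coneD_apply_s8, LinearMap.add_apply, LinearMap.id_apply, map_tmul, map_add, tmul_add,
    add_tmul, hz, hzτ, hz', hdd, hdd', hdτ, hdτ', zero_tmul, tmul_zero, add_zero, zero_add]
  refine Prod.ext ?_ ?_
  · abel
  · abel_nf
    -- `abel` works over `ℤ`; its coefficients are then reduced modulo 2
    simp only [← Int.cast_smul_eq_zsmul (ZMod 2)]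
    reduce_mod_char
    simp only [zero_smul, one_smul, zero_add, add_zero]

end CharTwo

theorem tensor_cone_homologous_two_general
    {C C' : Type*} [AddCommGroup C] [Module (ZMod 2) C]
    [AddCommGroup C'] [Module (ZMod 2) C']
    (d τ : C →ₗ[ZMod 2] C) (d' τ' : C' →ₗ[ZMod 2] C')
    (hdd : d ∘ₗ d = 0) (hdd' : d' ∘ₗ d' = 0)
    (hdτ : d ∘ₗ τ = τ ∘ₗ d) (hdτ' : d' ∘ₗ τ' = τ' ∘ₗ d')
    (z : C) (hz : d z = 0) (hzτ : τ z = z)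
    (z' : C') (hz' : d' z' = 0)
    (x y : C) (x' y' : C')
    (hxy : ∃ p : C × C, ((z, 0) : C × C) - (x, y) = coneD d τ p)
    (hxy' : ∃ p' : C' × C', ((0, z') : C' × C') - (x', y') = coneD d' τ' p') :
    ∃ q : (C ⊗[ZMod 2] C') × (C ⊗[ZMod 2] C'),
      (((0 : C ⊗[ZMod 2] C'), z ⊗ₜ[ZMod 2] z')
          : (C ⊗[ZMod 2] C') × (C ⊗[ZMod 2] C'))
        - (x ⊗ₜ[ZMod 2] x', y ⊗ₜ[ZMod 2] x' + (τ x) ⊗ₜ[ZMod 2] y')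
        = coneD
            (TensorProduct.map d LinearMap.id + TensorProduct.map LinearMap.id d')
            (TensorProduct.map τ τ') q := by
  obtain ⟨⟨a, b⟩, hab⟩ := hxy
  obtain ⟨⟨a', b'⟩, hab'⟩ := hxy'
  obtain ⟨hx, hy⟩ := (sub_eq_coneD_iff d τ).1 hab
  obtain ⟨hx', hy'⟩ := (sub_eq_coneD_iff d' τ').1 hab'
  rw [zero_add] at hy hx'
  refine ⟨_, Eq.symm <|
    (coneD_tensor_primitive d τ d' τ' hdd hdd' hdτ hdτ' hz hzτ hz' hx hy hx' hy').trans ?_⟩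
  rw [ZModModule.sub_eq_add, Prod.mk_add_mk, zero_add]

/-- if `z, z'` are τ-invariant cycles and `(z,0) ∼ (x,y)` in
`C_τ`, `(0,z') ∼ (x',y')` in `C'_τ`, then in `C⊗_τ = Cone(1⊗1 + τ⊗τ)` one has
`(0, z⊗z') ∼ (x⊗x', y⊗x' + τx⊗y')`. -/
theorem tensor_cone_homologous_two
    {C C' : Type*} [AddCommGroup C] [Module (ZMod 2) C]
    [AddCommGroup C'] [Module (ZMod 2) C']
    (d τ : C →ₗ[ZMod 2] C) (d' τ' : C' →ₗ[ZMod 2] C')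
    (hdd : d ∘ₗ d = 0) (hdd' : d' ∘ₗ d' = 0)
    (hτ : τ ∘ₗ τ = LinearMap.id) (hτ' : τ' ∘ₗ τ' = LinearMap.id)
    (hdτ : d ∘ₗ τ = τ ∘ₗ d) (hdτ' : d' ∘ₗ τ' = τ' ∘ₗ d')
    (z : C) (hz : d z = 0) (hzτ : τ z = z)
    (z' : C') (hz' : d' z' = 0) (hz'τ : τ' z' = z')
    (x y : C) (x' y' : C')
    (hxy : ∃ p : C × C, ((z, 0) : C × C) - (x, y) = coneD d τ p)
    (hxy' : ∃ p' : C' × C', ((0, z') : C' × C') - (x', y') = coneD d' τ' p') :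
    ∃ q : (C ⊗[ZMod 2] C') × (C ⊗[ZMod 2] C'),
      (((0 : C ⊗[ZMod 2] C'), z ⊗ₜ[ZMod 2] z')
          : (C ⊗[ZMod 2] C') × (C ⊗[ZMod 2] C'))
        - (x ⊗ₜ[ZMod 2] x', y ⊗ₜ[ZMod 2] x' + (τ x) ⊗ₜ[ZMod 2] y')
        = coneD
            (TensorProduct.map d LinearMap.id + TensorProduct.map LinearMap.id d')
            (TensorProduct.map τ τ') q :=
  tensor_cone_homologous_two_general d τ d' τ' hdd hdd' hdτ hdτ' z hz hzτ z' hz' x y x' y' hxy hxy'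
end

section
/- Let R be a PID, h ∈ R prime, and let M be a finitely generated R-module with M/Tor free. Suppose α, β ∈ M are elements and there exist u, v ∈ M with α = h^{d} u + t₁ and α + β = h^{d+1} v + t₂ for torsion elements t₁, t₂, where u generates a free rank-1 direct summand of M/Tor and (u, v) extends to a basis of M/Tor. If additionally β = σ(α) for an involution σ of M fixing Tor and acting on M/Tor, then d_h(α mod Tor) = d_h(β mod Tor) = d and d_h((α+β) mod Tor) = d + 1, where d_h denotes h-divisibility in the free module M/Tor. -/
/-!
In the free module `M/Tor` the classes of `α` and `α + β` are `h^d • b i` and `h^(d+1) • b j`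
for basis vectors `b i ≠ b j`, and the class of `β` is their difference `h^d • (h • b j - b i)`.
Divisibility of an element by `h^k` forces divisibility of each of its coordinates by `h^k`, and
in each case some coordinate is `h^e` times a unit, which caps the divisibility at exactly `e`.
-/

/-- The `h`-divisibility of an element `z` of a module `N`:
`d_h(z) = max { k | z ∈ h^k N }` (as `sSup` of a set of naturals). -/
noncomputable def dh {R N : Type*} [CommRing R] [AddCommGroup N] [Module R N]
    (h : R) (z : N) : ℕ :=
  sSup {k : ℕ | ∃ u : N, z = h ^ k • u}

lemma dh_eq_of_isGreatest {R N : Type*} [CommRing R] [AddCommGroup N] [Module R N]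
    {h : R} {z : N} {e : ℕ} (he : IsGreatest {k : ℕ | ∃ u : N, z = h ^ k • u} e) :
    dh h z = e :=
  he.csSup_eq

namespace Module.Basis

variable {R N ι : Type*} [CommRing R] [IsDomain R] [AddCommGroup N] [Module R N]

lemma dh_smul_eq_of_isUnit_repr (b : Basis ι R N) {h : R} (hh : Prime h) {w : N} {l : ι}
    (hw : IsUnit (b.repr w l)) (e : ℕ) : dh h (h ^ e • w) = e := by
  refine dh_eq_of_isGreatest ⟨⟨w, rfl⟩, ?_⟩
  rintro k ⟨u, hu⟩
  have hcoord : h ^ k ∣ h ^ e * b.repr w l :=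
    ⟨b.repr u l, by simpa [smul_eq_mul] using congrArg (fun x => b.repr x l) hu⟩
  exact (pow_dvd_pow_iff hh.ne_zero hh.not_isUnit).mp ((hw.dvd_mul_right).mp hcoord)

end Module.Basis

theorem dh_lee_classes_general
    {R M : Type*} [CommRing R] [IsDomain R]
    [AddCommGroup M] [Module R M]
    (h : R) (hh : Prime h)
    (α β : M) (d : ℕ) (u v : M) (t₁ t₂ : M)
    (ht₁ : t₁ ∈ Submodule.torsion R M) (ht₂ : t₂ ∈ Submodule.torsion R M)
    (hα : α = h ^ d • u + t₁)
    (hαβ : α + β = h ^ (d + 1) • v + t₂)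
    (hbasis : ∃ (ι : Type) (b : Module.Basis ι R (M ⧸ Submodule.torsion R M)) (i j : ι),
        i ≠ j ∧ b i = Submodule.mkQ (Submodule.torsion R M) u
          ∧ b j = Submodule.mkQ (Submodule.torsion R M) v) :
    dh h (Submodule.mkQ (Submodule.torsion R M) α) = d ∧
    dh h (Submodule.mkQ (Submodule.torsion R M) β) = d ∧
    dh h (Submodule.mkQ (Submodule.torsion R M) (α + β)) = d + 1 := by
  obtain ⟨ι, b, i, j, hij, hbi, hbj⟩ := hbasis
  set π := Submodule.mkQ (Submodule.torsion R M)
  have hπα : π α = h ^ d • b i := by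
    simp [π, hα, hbi, (Submodule.Quotient.mk_eq_zero _).2 ht₁]
  have hπαβ : π (α + β) = h ^ (d + 1) • b j := by
    simp [π, hαβ, hbj, (Submodule.Quotient.mk_eq_zero _).2 ht₂]
  have hπβ : π β = h ^ d • (h • b j - b i) := by
    rw [smul_sub, smul_smul, ← pow_succ, ← hπαβ, ← hπα, map_add, add_sub_cancel_left]
  refine ⟨?_, ?_, ?_⟩
  · rw [hπα]; exact b.dh_smul_eq_of_isUnit_repr hh (l := i) (by simp) d
  · rw [hπβ]; exact b.dh_smul_eq_of_isUnit_repr hh (l := i) (by simp [hij.symm]) d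
  · rw [hπαβ]; exact b.dh_smul_eq_of_isUnit_repr hh (l := j) (by simp) (d + 1)

/-- let `R` be a PID, `h` prime, `M` finitely generated with
`M/Tor` free. Suppose `α = h^d u + t₁` and `α + β = h^{d+1} v + t₂` with
`t₁, t₂` torsion, where the images of `u, v` in `M/Tor` are part of a basis,
and `β = σ(α)` for an involution `σ` of `M` preserving the torsion submodule.
Then `d_h(ᾱ) = d_h(β̄) = d` and `d_h(ᾱ + β̄) = d + 1` in `M/Tor`. -/
theorem dh_lee_classes
    {R M : Type*} [CommRing R] [IsDomain R] [IsPrincipalIdealRing R]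
    [AddCommGroup M] [Module R M] [Module.Finite R M]
    [Module.Free R (M ⧸ Submodule.torsion R M)]
    (h : R) (hh : Prime h)
    (α β : M) (d : ℕ) (u v : M) (t₁ t₂ : M)
    (ht₁ : t₁ ∈ Submodule.torsion R M) (ht₂ : t₂ ∈ Submodule.torsion R M)
    (hα : α = h ^ d • u + t₁)
    (hαβ : α + β = h ^ (d + 1) • v + t₂)
    (hbasis : ∃ (ι : Type) (b : Module.Basis ι R (M ⧸ Submodule.torsion R M)) (i j : ι),
        i ≠ j ∧ b i = Submodule.mkQ (Submodule.torsion R M) u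
          ∧ b j = Submodule.mkQ (Submodule.torsion R M) v)
    (σ : M →ₗ[R] M) (hσ2 : σ ∘ₗ σ = LinearMap.id)
    (hσt : ∀ t ∈ Submodule.torsion R M, σ t ∈ Submodule.torsion R M)
    (hβ : β = σ α) :
    dh h (Submodule.mkQ (Submodule.torsion R M) α) = d ∧
    dh h (Submodule.mkQ (Submodule.torsion R M) β) = d ∧
    dh h (Submodule.mkQ (Submodule.torsion R M) (α + β)) = d + 1 :=
  dh_lee_classes_general h hh α β d u v t₁ t₂ ht₁ ht₂ hα hαβ hbasis
end
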